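/- Suppose a polynomial of the form P(x)^2 + c (with c ≠ 0, P monic of degree m over C) has combinatorial type (m_1,...,m_k) (i.e., k distinct roots with multiplicities m_i). If ∑_i ⌊m_i/2⌋ ≥ m - 1 and at least one m_i is odd, then exactly two of the m_i are odd and (m_1,...,m_k) is a permutation of (2,...,2,1,1) with m-1 twos. -/

import Mathlib

/-!
Write `f = P² + c = ∏ (X - xᵢ)^mᵢ`. Since `f' = 2PP'` and no root of `f` is a root of `P`
(as `c ≠ 0`), the factor `∏ (X - xᵢ)^(mᵢ - 1)` of `f'` divides `P'`, so `∑ (mᵢ - 1) ≤ m - 1`.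
As `⌊mᵢ/2⌋ ≤ mᵢ - 1`, the hypothesis `∑ ⌊mᵢ/2⌋ ≥ m - 1` forces equality termwise, i.e. every
`mᵢ` is `1` or `2`, and counting with `∑ mᵢ = 2m` gives the shape.
-/

open Polynomial Finset

namespace Polynomial

variable {K ι : Type*} [Field K] [Fintype ι]

theorem natDegree_prod_X_sub_C_pow (x : ι → K) (n : ι → ℕ) :
    (∏ i, (X - C (x i)) ^ n i).natDegree = ∑ i, n i := by
  rw [natDegree_prod _ _ fun i _ => pow_ne_zero _ (X_sub_C_ne_zero _)]
  simp only [natDegree_pow, natDegree_X_sub_C, mul_one]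

theorem prod_X_sub_C_pow_pred_dvd_derivative {x : ι → K} (hx : Function.Injective x)
    (n : ι → ℕ) : ∏ i, (X - C (x i)) ^ (n i - 1) ∣ derivative (∏ i, (X - C (x i)) ^ n i) :=
  Fintype.prod_dvd_of_coprime (fun _ _ hij => (pairwise_coprime_X_sub_C hx hij).pow) fun i =>
    pow_sub_one_dvd_derivative_of_pow_dvd (dvd_prod_of_mem _ (mem_univ i))

theorem sum_pred_le_natDegree_pred_of_sq_add_C_eq_prod [CharZero K] {P : K[X]}
    (hP : 0 < P.natDegree) {c : K} (hc : c ≠ 0) {x : ι → K} (hx : Function.Injective x)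
    {n : ι → ℕ} (hfac : P ^ 2 + C c = ∏ i, (X - C (x i)) ^ n i) :
    ∑ i, (n i - 1) ≤ P.natDegree - 1 := by
  have hdvd : ∏ i, (X - C (x i)) ^ (n i - 1) ∣ P * (C 2 * derivative P) := by
    have := prod_X_sub_C_pow_pred_dvd_derivative hx n
    rwa [← hfac, derivative_add, derivative_C, add_zero, derivative_sq, mul_comm (C 2),
      mul_assoc] at this
  have hcop : IsCoprime (∏ i, (X - C (x i)) ^ (n i - 1)) P := by
    refine IsCoprime.prod_left fun i _ => ?_
    rcases Nat.eq_zero_or_pos (n i - 1) with h0 | hpos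
    · rw [h0, pow_zero]
      exact isCoprime_one_left
    have hroot : (P ^ 2 + C c).IsRoot (x i) := by
      rw [hfac, IsRoot, eval_prod]
      exact prod_eq_zero (mem_univ i) (by simp [zero_pow (by omega : n i ≠ 0)])
    refine IsCoprime.pow_left ((irreducible_X_sub_C _).coprime_iff_not_dvd.2 ?_)
    rw [dvd_iff_isRoot]
    intro hP0
    simp [IsRoot, hP0.eq_zero, hc] at hroot
  have hP' : C (2 : K) * derivative P ≠ 0 :=
    mul_ne_zero (by simp) fun h => hP.ne' (derivative_eq_zero.1 h)
  calc ∑ i, (n i - 1) = (∏ i, (X - C (x i)) ^ (n i - 1)).natDegree :=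
        (natDegree_prod_X_sub_C_pow x _).symm
    _ ≤ (C (2 : K) * derivative P).natDegree :=
        natDegree_le_of_dvd (hcop.dvd_of_dvd_mul_left hdvd) hP'
    _ ≤ (derivative P).natDegree := natDegree_C_mul_le _ _
    _ ≤ P.natDegree - 1 := natDegree_derivative_le P

end Polynomial

section OneOrTwo

variable {ι : Type*} [Fintype ι] {n : ι → ℕ}

theorem eq_one_or_two_of_sum_pred_le_sum_div_two (hn : ∀ i, 1 ≤ n i)
    (h : ∑ i, (n i - 1) ≤ ∑ i, n i / 2) (i : ι) : n i = 1 ∨ n i = 2 := by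
  have hle : ∀ i ∈ univ, n i / 2 ≤ n i - 1 := fun i _ => by have := hn i; omega
  have := (sum_eq_sum_iff_of_le hle).1 (le_antisymm (sum_le_sum hle) h) i (mem_univ i)
  have := hn i
  omega

theorem sum_comp_eq_of_forall_eq_one_or_two {M : Type*} [AddCommMonoid M] (f : ℕ → M)
    (h : ∀ i, n i = 1 ∨ n i = 2) :
    ∑ i, f (n i) = #{i | n i = 1} • f 1 + #{i | n i = 2} • f 2 := by
  have hne : (univ.filter fun i => ¬n i = 1) = univ.filter fun i => n i = 2 :=
    filter_congr fun i _ => by rcases h i with h | h <;> simp [h]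
  rw [← sum_filter_add_sum_filter_not univ (fun i => n i = 1), hne,
    sum_congr rfl fun i hi => congrArg f (mem_filter.1 hi).2,
    sum_congr (g := fun _ => f 2) rfl fun i hi => congrArg f (mem_filter.1 hi).2,
    sum_const, sum_const]

end OneOrTwo

theorem stmt7_general (m k : ℕ) (hm : 2 ≤ m) (P : Polynomial ℂ)
    (hdeg : P.natDegree = m) (c : ℂ) (hc : c ≠ 0) (x : Fin k → ℂ) (mi : Fin k → ℕ)
    (hx : Function.Injective x) (hmi : ∀ i, 1 ≤ mi i)
    (hfac : P ^ 2 + C c = ∏ i, (X - C (x i)) ^ mi i)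
    (hfloor : m - 1 ≤ ∑ i, mi i / 2) :
    k = m + 1 ∧
    (Finset.univ.filter fun i => mi i = 1).card = 2 ∧
    (Finset.univ.filter fun i => mi i = 2).card = m - 1 ∧
    (∀ i, mi i = 1 ∨ mi i = 2) := by
  have hsum : ∑ i, mi i = 2 * m := by
    rw [← natDegree_prod_X_sub_C_pow x mi, ← hfac, natDegree_add_C, natDegree_pow, hdeg]
  have hpred : ∑ i, (mi i - 1) ≤ m - 1 :=
    hdeg ▸ sum_pred_le_natDegree_pred_of_sq_add_C_eq_prod (by omega) hc hx hfac
  have h12 := eq_one_or_two_of_sum_pred_le_sum_div_two hmi (hpred.trans hfloor)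
  have hcard := sum_comp_eq_of_forall_eq_one_or_two (fun _ => 1) h12
  have hsum12 := sum_comp_eq_of_forall_eq_one_or_two id h12
  have hhalf12 := sum_comp_eq_of_forall_eq_one_or_two (· / 2) h12
  have hpred12 := sum_comp_eq_of_forall_eq_one_or_two (· - 1) h12
  simp only [sum_const, card_univ, Fintype.card_fin, id, smul_eq_mul, mul_one]
    at hcard hsum12 hhalf12 hpred12
  refine ⟨?_, ?_, ?_, h12⟩ <;> omega

/-- If P^2 + c (c ≠ 0, P monic of degree m over ℂ) has combinatorial type
(m_1,…,m_k) with ∑ ⌊m_i/2⌋ ≥ m-1 and at least one m_i odd, then exactly two of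
the m_i equal 1, the remaining m-1 of them equal 2, and k = m+1. -/
theorem stmt7 (m k : ℕ) (hm : 2 ≤ m) (P : Polynomial ℂ) (hP : P.Monic)
    (hdeg : P.natDegree = m) (c : ℂ) (hc : c ≠ 0) (x : Fin k → ℂ) (mi : Fin k → ℕ)
    (hx : Function.Injective x) (hmi : ∀ i, 1 ≤ mi i)
    (hfac : P ^ 2 + C c = ∏ i, (X - C (x i)) ^ mi i)
    (hfloor : m - 1 ≤ ∑ i, mi i / 2) (hodd : ∃ i, Odd (mi i)) :
    k = m + 1 ∧
    (Finset.univ.filter fun i => mi i = 1).card = 2 ∧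
    (Finset.univ.filter fun i => mi i = 2).card = m - 1 ∧
    (∀ i, mi i = 1 ∨ mi i = 2) :=
  stmt7_general m k hm P hdeg c hc x mi hx hmi hfac hfloor
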